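/- For 1 ≤ m ≤ n and 0 ≤ k ≤ n-1, there is an injection from the set PF(m,n;k) of k-Naples (m,n)-parking functions into the set LPF(m,n+k;k) of k-left obstructed (m,n)-parking functions; consequently |PF(m,n;k)| ≤ |LPF(m,n+k;k)|. -/

import Mathlib

/-- The first unoccupied spot `s` with `p ≤ s ≤ n`, if any. -/
def forwardSpot (n : ℕ) (occ : Finset ℕ) (p : ℕ) : Option ℕ :=
  (List.range' p (n + 1 - p)).find? (fun s => decide (s ∉ occ))

/-- Classical (forward-only) parking process: cars park one by one, each at the
first free spot `≥` its preference; returns the final occupied set if all park. -/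
def classicalPark (n : ℕ) : List ℕ → Finset ℕ → Option (Finset ℕ)
  | [], occ => some occ
  | p :: rest, occ =>
    match forwardSpot n occ p with
    | none => none
    | some s => classicalPark n rest (insert s occ)

/-- Backward candidates `p-1, p-2, …, p-k` that are at least `1`. -/
def backwardCandidates (k p : ℕ) : List ℕ :=
  ((List.range k).map (fun i => p - (i + 1))).filter (fun s => decide (1 ≤ s))

/-- The spot where a car with preference `p` parks under the `k`-Naples rule. -/
def naplesSpot (n k : ℕ) (occ : Finset ℕ) (p : ℕ) : Option ℕ :=
  if p ∈ occ then
    match (backwardCandidates k p).find? (fun s => decide (s ∉ occ)) with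
    | some s => some s
    | none => forwardSpot n occ p
  else some p

/-- `k`-Naples parking process; returns the final occupied set if all cars park. -/
def naplesPark (n k : ℕ) : List ℕ → Finset ℕ → Option (Finset ℕ)
  | [], occ => some occ
  | p :: rest, occ =>
    match naplesSpot n k occ p with
    | none => none
    | some s => naplesPark n k rest (insert s occ)

/-- All cars park under the `k`-Naples rule and no car with preference `p ≤ k`
finds all of `1, …, p` occupied (no car exits the lot searching backward). -/
def naplesContainedAux (n k : ℕ) : List ℕ → Finset ℕ → Bool
  | [], _ => true
  | p :: rest, occ =>
    (decide (p ≤ k → ¬ Finset.Icc 1 p ⊆ occ)) &&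
    match naplesSpot n k occ p with
    | none => false
    | some s => naplesContainedAux n k rest (insert s occ)

/-- The (1-based) preference list of `a : Fin m → Fin n`. -/
def prefList {m n : ℕ} (a : Fin m → Fin n) : List ℕ :=
  (List.ofFn a).map (fun x => (x : ℕ) + 1)

/-- The set of classical `(m,n)`-parking functions. -/
def PFset (m n : ℕ) : Finset (Fin m → Fin n) :=
  Finset.univ.filter (fun a => (classicalPark n (prefList a) ∅).isSome)

/-- The set of `k`-Naples `(m,n)`-parking functions. -/
def NPFset (m n k : ℕ) : Finset (Fin m → Fin n) :=
  Finset.univ.filter (fun a => (naplesPark n k (prefList a) ∅).isSome)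

/-- The set of contained `k`-Naples `(m,n)`-parking functions. -/
def Bset (m n k : ℕ) : Finset (Fin m → Fin n) :=
  Finset.univ.filter (fun a => naplesContainedAux n k (prefList a) ∅)

/-- The set of `k`-left obstructed `(m,n)`-parking functions: `m` cars on
`n + k` spots whose first `k` spots are obstructed, forward-only rule. -/
def LPFset (m n k : ℕ) : Finset (Fin m → Fin (n + k)) :=
  Finset.univ.filter (fun a => (classicalPark (n + k) (prefList a) (Finset.Icc 1 k)).isSome)

/-!
The injection is the inclusion `[n] ⊆ [n + k]`: a `k`-Naples parking function, read as
preferences on the street whose first `k` spots are obstructed, still parks every car.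
Run both processes side by side and maintain the invariant that for every `u ≥ 1` the Naples
street has at most as many free spots in `[u, n]` as the obstructed street has in
`[u + k, n + k]` (initially both counts are `n + 1 - u`). A Naples car with preference `p`
parks somewhere in `[max (p - k) 1, n]`, so the invariant at `u = max (p - k) 1` provides a free
obstructed spot `≥ p`, and the forward-only car parks. The invariant survives the step: the only
problematic case is a Naples car parking left of `u` while the obstructed car parks in
`[u + k, n + k]`, and then the invariant at `max (p - k) 1` leaves a spare free spot.
-/

open Finset

lemma forwardSpot_eq_some {N p s : ℕ} {occ : Finset ℕ} (h : forwardSpot N occ p = some s) :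
    s ∉ occ ∧ p ≤ s ∧ s ≤ N ∧ ∀ t, p ≤ t → t < s → t ∈ occ := by
  obtain ⟨hs, hmem, hmin⟩ := List.find?_range'_eq_some.1 h
  simp only [decide_eq_true_eq, List.mem_range'_1, Bool.not_eq_true', decide_eq_false_iff_not,
    not_not] at hs hmem hmin
  exact ⟨hs, hmem.1, by omega, hmin⟩

lemma forwardSpot_isSome {N p x : ℕ} {occ : Finset ℕ} (hx : x ∉ occ) (hpx : p ≤ x)
    (hxN : x ≤ N) : (forwardSpot N occ p).isSome :=
  List.find?_isSome.2 ⟨x, List.mem_range'_1.2 (by omega), by simpa using hx⟩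

lemma mem_backwardCandidates {k p s : ℕ} (h : s ∈ backwardCandidates k p) :
    1 ≤ s ∧ p - k ≤ s ∧ s < p := by
  simp only [backwardCandidates, List.mem_filter, List.mem_map, List.mem_range,
    decide_eq_true_eq] at h
  obtain ⟨⟨i, hi, rfl⟩, h1⟩ := h
  omega

lemma naplesSpot_mem {n k p s : ℕ} {occ : Finset ℕ} (hp : p ∈ Icc 1 n)
    (h : naplesSpot n k occ p = some s) : s ∈ Icc (max (p - k) 1) n \ occ := by
  rw [mem_Icc] at hp
  simp only [mem_sdiff, mem_Icc, sup_le_iff]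
  unfold naplesSpot at h
  split_ifs at h with hpo
  · split at h
    · next s' hb =>
      cases h
      have hs := List.find?_some hb
      have hback := mem_backwardCandidates (List.mem_of_find?_eq_some hb)
      simp only [decide_eq_true_eq] at hs
      exact ⟨⟨⟨by omega, by omega⟩, by omega⟩, hs⟩
    · obtain ⟨hs, hps, hsn, -⟩ := forwardSpot_eq_some h
      exact ⟨⟨⟨by omega, by omega⟩, hsn⟩, hs⟩
  · cases h
    exact ⟨⟨⟨by omega, hp.1⟩, hp.2⟩, hpo⟩

def FreeCountLE (n k : ℕ) (occN occC : Finset ℕ) : Prop :=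
  ∀ u, 1 ≤ u → #(Icc u n \ occN) ≤ #(Icc (u + k) (n + k) \ occC)

namespace FreeCountLE

variable {n k p sN : ℕ} {occN occC : Finset ℕ}

lemma empty_Icc : FreeCountLE n k ∅ (Icc 1 k) := by
  intro u hu
  have hdisj : Disjoint (Icc (u + k) (n + k)) (Icc 1 k) :=
    disjoint_left.2 fun x hx hx' => by rw [mem_Icc] at hx hx'; omega
  rw [sdiff_empty, hdisj.sdiff_eq_left, Nat.card_Icc, Nat.card_Icc]
  omega

lemma forwardSpot_isSome (hinv : FreeCountLE n k occN occC)
    (hsN : sN ∈ Icc (max (p - k) 1) n \ occN) : (forwardSpot (n + k) occC p).isSome := by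
  obtain ⟨x, hx⟩ := card_pos.1 ((card_pos.2 ⟨sN, hsN⟩).trans_le (hinv _ (le_max_right _ _)))
  simp only [mem_sdiff, mem_Icc] at hx
  exact _root_.forwardSpot_isSome hx.2 (by omega) hx.1.2

lemma insert_insert {sC : ℕ} (hinv : FreeCountLE n k occN occC)
    (hsN : sN ∈ Icc (max (p - k) 1) n \ occN) (hsC : forwardSpot (n + k) occC p = some sC) :
    FreeCountLE n k (insert sN occN) (insert sC occC) := by
  obtain ⟨-, -, -, hmin⟩ := forwardSpot_eq_some hsC
  intro u hu
  rw [sdiff_insert, sdiff_insert]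
  set A := Icc u n \ occN
  set B := Icc (u + k) (n + k) \ occC
  by_cases hC : sC ∈ B
  swap
  · rw [erase_eq_of_notMem hC]
    exact card_erase_le.trans (hinv u hu)
  by_cases hN : sN ∈ A
  · rw [card_erase_of_mem hN, card_erase_of_mem hC]
    exact Nat.sub_le_sub_right (hinv u hu) 1
  rw [erase_eq_of_notMem hN, card_erase_of_mem hC]
  -- The Naples car parked left of `u`, while every free obstructed spot `≥ p` is `≥ sC ≥ u + k`.
  have hsNu : sN < u := by
    rw [mem_sdiff, mem_Icc] at hsN
    by_contra! h
    exact hN (mem_sdiff.2 ⟨mem_Icc.2 ⟨h, hsN.1.2⟩, hsN.2⟩)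
  have hA : insert sN A ⊆ Icc (max (p - k) 1) n \ occN := by
    refine insert_subset hsN fun y hy => ?_
    simp only [A, mem_sdiff, mem_Icc] at hy hsN ⊢
    exact ⟨⟨by omega, hy.1.2⟩, hy.2⟩
  have hB : Icc (max (p - k) 1 + k) (n + k) \ occC ⊆ B := by
    intro y hy
    simp only [B, mem_sdiff, mem_Icc] at hy ⊢
    obtain ⟨⟨hy₁, hy₂⟩, hy⟩ := hy
    have huC : u + k ≤ sC := (mem_Icc.1 (mem_sdiff.1 hC).1).1
    refine ⟨⟨?_, hy₂⟩, hy⟩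
    by_contra hlt
    exact hy (hmin y (by omega) (by omega))
  have hcardA := card_le_card hA
  rw [card_insert_of_notMem hN] at hcardA
  have hcardB := (hinv _ (le_max_right _ _)).trans (card_le_card hB)
  have hBpos : 0 < #B := card_pos.2 ⟨sC, hC⟩
  omega

theorem classicalPark_isSome :
    ∀ {l : List ℕ} {occN occC : Finset ℕ}, (∀ p ∈ l, p ∈ Icc 1 n) →
      FreeCountLE n k occN occC → (naplesPark n k l occN).isSome →
      (classicalPark (n + k) l occC).isSome
  | [], _, _, _, _, _ => rfl
  | p :: rest, occN, occC, hl, hinv, hpark => by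
    rw [naplesPark] at hpark
    split at hpark
    · simp at hpark
    · next sN hsN =>
      have hmem := naplesSpot_mem (hl p List.mem_cons_self) hsN
      obtain ⟨sC, hsC⟩ := Option.isSome_iff_exists.1 (hinv.forwardSpot_isSome hmem)
      rw [classicalPark, hsC]
      exact classicalPark_isSome (fun q hq => hl q (List.mem_cons_of_mem _ hq))
        (hinv.insert_insert hmem hsC) hpark

end FreeCountLE

lemma prefList_eq_ofFn {m n : ℕ} (a : Fin m → Fin n) :
    prefList a = List.ofFn fun i => (a i : ℕ) + 1 := by
  simp only [prefList, List.bind_eq_flatMap, List.pure_def, ← List.map_eq_flatMap,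
    List.map_ofFn]
  rfl

lemma mem_Icc_of_mem_prefList {m n p : ℕ} {a : Fin m → Fin n} (h : p ∈ prefList a) :
    p ∈ Icc 1 n := by
  rw [prefList_eq_ofFn, List.mem_ofFn] at h
  obtain ⟨i, rfl⟩ := h
  simp only [mem_Icc]
  omega

lemma prefList_castLE_comp {m n N : ℕ} (h : n ≤ N) (a : Fin m → Fin n) :
    prefList (Fin.castLE h ∘ a) = prefList a := by
  simp only [prefList_eq_ofFn, Function.comp_apply, Fin.val_castLE]

lemma castLE_comp_mem_LPFset {m n k : ℕ} {a : Fin m → Fin n} (ha : a ∈ NPFset m n k) :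
    Fin.castLE (Nat.le_add_right n k) ∘ a ∈ LPFset m n k := by
  rw [NPFset, mem_filter] at ha
  rw [LPFset, mem_filter, prefList_castLE_comp]
  exact ⟨mem_univ _, FreeCountLE.classicalPark_isSome (fun _ => mem_Icc_of_mem_prefList)
    FreeCountLE.empty_Icc ha.2⟩

theorem naples_into_obstructed_general (m n k : ℕ) :
    (∃ F : (Fin m → Fin n) → (Fin m → Fin (n + k)),
        (∀ a ∈ NPFset m n k, F a ∈ LPFset m n k) ∧
          Set.InjOn F ↑(NPFset m n k)) ∧
      (NPFset m n k).card ≤ (LPFset m n k).card := by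
  set F : (Fin m → Fin n) → (Fin m → Fin (n + k)) := (Fin.castLE (Nat.le_add_right n k) ∘ ·)
  have hmaps : ∀ a ∈ NPFset m n k, F a ∈ LPFset m n k := fun _ => castLE_comp_mem_LPFset
  have hinj : Set.InjOn F ↑(NPFset m n k) := (Fin.castLE_injective _).comp_left.injOn
  exact ⟨⟨F, hmaps, hinj⟩, card_le_card_of_injOn F hmaps hinj⟩

theorem naples_into_obstructed (m n k : ℕ) (hm : 1 ≤ m) (hmn : m ≤ n) (hk : k ≤ n - 1) :
    (∃ F : (Fin m → Fin n) → (Fin m → Fin (n + k)),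
        (∀ a ∈ NPFset m n k, F a ∈ LPFset m n k) ∧
          Set.InjOn F ↑(NPFset m n k)) ∧
      (NPFset m n k).card ≤ (LPFset m n k).card :=
  naples_into_obstructed_general m n k
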